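/- Let φ(z) = z²/(3 − z − z²), σ₁(z) = (1 + √(13 + 12z))/6 and σ₂(z) = (1 − √(13 + 12z))/6 with the principal square root. Then σ₁ and σ₂ are holomorphic on the closed unit disc and are the branches of φₑ⁻¹; the weight g₁(z) = zσ₁'(z)/σ₁(z) is bounded on 𝕌, while g₂(z) = zσ₂'(z)/σ₂(z) has a simple pole at z = −1 (since σ₂(−1) = 0). -/

import Mathlib

open Metric Filter Topology Complex

/-!
The branches of `φₑ⁻¹` are the roots `(1 ± s) / 6` of `3 w² - w - 1 = z`, where
`s(z) = √(13 + 12 z)`.  On the closed unit disc `13 + 12 z` lies in the right half-plane, where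
the principal root is holomorphic with `s' = 6 / s`.  Hence `g₁ = 6 z / (s (1 + s))`, and
`1 + s` never vanishes because the principal root is never `-1`; so `g₁` is continuous on the
compact closed disc.  On the other hand `1 - s` vanishes exactly at `z = -1`, and
`s² - 1 = 12 (z + 1)` gives `(z + 1) g₂ = z (s + 1) / (2 s) → -1`.
-/

namespace Complex

lemma cpow_one_half_sq (w : ℂ) : (w ^ (1 / 2 : ℂ)) ^ 2 = w := by
  rw [one_div, cpow_ofNat_inv_pow]

lemma cpow_one_half_ne_neg_one (w : ℂ) : w ^ (1 / 2 : ℂ) ≠ -1 := by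
  intro h
  have hw : w = 1 := by rw [← cpow_one_half_sq w, h]; norm_num
  norm_num [hw] at h

lemma ofReal_add_mem_slitPlane {a : ℝ} {w : ℂ} (h : ‖w‖ < a) : (a : ℂ) + w ∈ slitPlane := by
  refine mem_slitPlane_iff.2 (Or.inl ?_)
  have := neg_abs_le w.re
  have := (abs_re_le_norm w).trans_lt h
  simp only [add_re, ofReal_re]
  linarith

end Complex

theorem HasDerivAt.cpow_one_half {f : ℂ → ℂ} {f' x : ℂ} (hf : HasDerivAt f f' x)
    (h : f x ∈ slitPlane) :
    HasDerivAt (fun x => f x ^ (1 / 2 : ℂ)) (f' / (2 * f x ^ (1 / 2 : ℂ))) x := by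
  refine (hf.cpow_const h).congr_deriv ?_
  rw [show (1 / 2 - 1 : ℂ) = -(1 / 2) by norm_num, cpow_neg]
  ring

/-- `13 + 12 z` is the discriminant of the quadratic equation `3 w ^ 2 - w - 1 = z`. -/
noncomputable def sqrtDisc (z : ℂ) : ℂ := (13 + 12 * z) ^ (1 / 2 : ℂ)

lemma sqrtDisc_sq (z : ℂ) : sqrtDisc z ^ 2 = 13 + 12 * z := cpow_one_half_sq _

lemma sqrtDisc_neg_one : sqrtDisc (-1) = 1 := by norm_num [sqrtDisc]

lemma sqrtDisc_ne_one {z : ℂ} (hz : z ≠ -1) : sqrtDisc z ≠ 1 := by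
  intro h
  have := sqrtDisc_sq z
  rw [h] at this
  exact hz (by linear_combination -this / 12)

lemma sqrtDisc_ne_zero {z : ℂ} (h : 13 + 12 * z ∈ slitPlane) : sqrtDisc z ≠ 0 := by
  intro h0
  have := sqrtDisc_sq z
  rw [h0] at this
  exact slitPlane_ne_zero h (by linear_combination -this)

lemma thirteen_add_twelve_mul_mem_slitPlane {z : ℂ} (hz : z ∈ closedBall (0 : ℂ) 1) :
    13 + 12 * z ∈ slitPlane := by
  have h : ‖12 * z‖ < (13 : ℝ) := by
    rw [norm_mul, norm_ofNat]
    linarith [mem_closedBall_zero_iff.1 hz]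
  simpa using ofReal_add_mem_slitPlane h

lemma hasDerivAt_sqrtDisc {z : ℂ} (h : 13 + 12 * z ∈ slitPlane) :
    HasDerivAt sqrtDisc (6 / sqrtDisc z) z := by
  have hlin : HasDerivAt (fun z : ℂ => 13 + 12 * z) 12 z := by
    simpa using ((hasDerivAt_id z).const_mul (12 : ℂ)).const_add 13
  refine (hlin.cpow_one_half h).congr_deriv ?_
  rw [← sqrtDisc]
  field_simp
  norm_num

lemma hasDerivAt_one_add_sqrtDisc_div_six {z : ℂ} (h : 13 + 12 * z ∈ slitPlane) :
    HasDerivAt (fun z => (1 + sqrtDisc z) / 6) (sqrtDisc z)⁻¹ z :=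
  (((hasDerivAt_const z 1).add (hasDerivAt_sqrtDisc h)).div_const 6).congr_deriv (by ring)

lemma hasDerivAt_one_sub_sqrtDisc_div_six {z : ℂ} (h : 13 + 12 * z ∈ slitPlane) :
    HasDerivAt (fun z => (1 - sqrtDisc z) / 6) (-(sqrtDisc z)⁻¹) z :=
  (((hasDerivAt_const z 1).sub (hasDerivAt_sqrtDisc h)).div_const 6).congr_deriv (by ring)

lemma mul_logDeriv_one_add_sqrtDisc {z : ℂ} (h : 13 + 12 * z ∈ slitPlane) :
    z * logDeriv (fun z => (1 + sqrtDisc z) / 6) z = 6 * z / (sqrtDisc z * (1 + sqrtDisc z)) := by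
  rw [logDeriv_apply, (hasDerivAt_one_add_sqrtDisc_div_six h).deriv]
  field_simp

lemma exists_bound_mul_logDeriv_one_add_sqrtDisc : ∃ M : ℝ, ∀ z ∈ closedBall (0 : ℂ) 1,
    ‖z * logDeriv (fun z => (1 + sqrtDisc z) / 6) z‖ ≤ M := by
  have hcont : ContinuousOn (fun z => 6 * z / (sqrtDisc z * (1 + sqrtDisc z)))
      (closedBall (0 : ℂ) 1) := by
    have hS : ContinuousOn sqrtDisc (closedBall (0 : ℂ) 1) := fun z hz =>
      (hasDerivAt_sqrtDisc (thirteen_add_twelve_mul_mem_slitPlane hz)).continuousAt.continuousWithinAt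
    refine (continuousOn_const.mul continuousOn_id).div (hS.mul (continuousOn_const.add hS))
      fun z hz => mul_ne_zero (sqrtDisc_ne_zero (thirteen_add_twelve_mul_mem_slitPlane hz)) ?_
    rw [add_comm, Ne, add_eq_zero_iff_eq_neg]
    exact cpow_one_half_ne_neg_one _
  obtain ⟨M, hM⟩ := (isCompact_closedBall (0 : ℂ) 1).exists_bound_of_continuousOn hcont
  refine ⟨M, fun z hz => ?_⟩
  rw [mul_logDeriv_one_add_sqrtDisc (thirteen_add_twelve_mul_mem_slitPlane hz)]
  exact hM z hz

lemma add_one_mul_mul_logDeriv_one_sub_sqrtDisc {z : ℂ} (h : 13 + 12 * z ∈ slitPlane)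
    (hz : z ≠ -1) :
    (z + 1) * (z * logDeriv (fun z => (1 - sqrtDisc z) / 6) z)
      = z * (sqrtDisc z + 1) / (2 * sqrtDisc z) := by
  have h0 := sqrtDisc_ne_zero h
  have h1 : 1 - sqrtDisc z ≠ 0 := sub_ne_zero.2 (sqrtDisc_ne_one hz).symm
  rw [logDeriv_apply, (hasDerivAt_one_sub_sqrtDisc_div_six h).deriv]
  field_simp
  linear_combination z * sqrtDisc_sq z

lemma tendsto_add_one_mul_mul_logDeriv_one_sub_sqrtDisc :
    Tendsto (fun z => (z + 1) * (z * logDeriv (fun z => (1 - sqrtDisc z) / 6) z))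
      (𝓝[≠] (-1)) (𝓝 (-1)) := by
  have hmem : 13 + 12 * (-1 : ℂ) ∈ slitPlane := by norm_num
  have hnear : ∀ᶠ z in 𝓝 (-1 : ℂ), 13 + 12 * z ∈ slitPlane :=
    (by fun_prop : Continuous fun z : ℂ => 13 + 12 * z).continuousAt.preimage_mem_nhds
      (isOpen_slitPlane.mem_nhds hmem)
  have hcont : ContinuousAt (fun z => z * (sqrtDisc z + 1) / (2 * sqrtDisc z)) (-1) := by
    have hS := (hasDerivAt_sqrtDisc hmem).continuousAt
    exact (continuousAt_id.mul (hS.add continuousAt_const)).div (continuousAt_const.mul hS)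
      (by norm_num [sqrtDisc_neg_one])
  have hlim : Tendsto (fun z => z * (sqrtDisc z + 1) / (2 * sqrtDisc z)) (𝓝[≠] (-1))
      (𝓝 (-1)) := by
    convert hcont.tendsto.mono_left nhdsWithin_le_nhds using 2
    norm_num [sqrtDisc_neg_one]
  refine hlim.congr' ?_
  filter_upwards [nhdsWithin_le_nhds hnear, self_mem_nhdsWithin] with z hz hz1
  exact (add_one_mul_mul_logDeriv_one_sub_sqrtDisc hz hz1).symm

/-- Let `φ(z) = z²/(3 - z - z²)`, with exterior map `φₑ(w) = 3w² - w - 1`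
(`φₑ = ρ ∘ φ ∘ ρ` away from `w = 0`), and `σⱼ(z) = (1 ± √(13 + 12z))/6` (principal square
root).  Then `σ₁, σ₂` are holomorphic on the closed unit disc and are the branches of
`φₑ⁻¹`; the weight `g₁(z) = zσ₁'(z)/σ₁(z)` is bounded on the unit disc, while
`g₂(z) = zσ₂'(z)/σ₂(z)` has a simple pole at `z = -1` (indeed `σ₂(-1) = 0` and
`(z+1)g₂(z)` tends to a nonzero limit as `z → -1`). -/
theorem stmt_13 (φ φe σ₁ σ₂ g₁ g₂ : ℂ → ℂ)
    (hφ : ∀ z, φ z = z ^ 2 / (3 - z - z ^ 2))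
    (hφe : ∀ w, φe w = 3 * w ^ 2 - w - 1)
    (hσ₁ : ∀ z, σ₁ z = (1 + (13 + 12 * z) ^ ((1 : ℂ) / 2)) / 6)
    (hσ₂ : ∀ z, σ₂ z = (1 - (13 + 12 * z) ^ ((1 : ℂ) / 2)) / 6)
    (hg₁ : ∀ z, g₁ z = z * deriv σ₁ z / σ₁ z)
    (hg₂ : ∀ z, g₂ z = z * deriv σ₂ z / σ₂ z) :
    (∀ w : ℂ, w ≠ 0 → ((starRingEnd ℂ) (φ ((starRingEnd ℂ) w)⁻¹))⁻¹ = φe w)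
    ∧ (∀ z ∈ closedBall (0 : ℂ) 1, DifferentiableAt ℂ σ₁ z ∧ DifferentiableAt ℂ σ₂ z)
    ∧ (∀ z : ℂ, φe (σ₁ z) = z ∧ φe (σ₂ z) = z)
    ∧ (∃ M : ℝ, ∀ z ∈ ball (0 : ℂ) 1, ‖g₁ z‖ ≤ M)
    ∧ σ₂ (-1) = 0
    ∧ (∃ L : ℂ, L ≠ 0 ∧
        Filter.Tendsto (fun z => (z + 1) * g₂ z) (nhdsWithin (-1) {(-1 : ℂ)}ᶜ) (nhds L)) := by
  obtain rfl : φ = fun z => z ^ 2 / (3 - z - z ^ 2) := funext hφ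
  obtain rfl : φe = fun w => 3 * w ^ 2 - w - 1 := funext hφe
  obtain rfl : σ₁ = fun z => (1 + sqrtDisc z) / 6 := funext hσ₁
  obtain rfl : σ₂ = fun z => (1 - sqrtDisc z) / 6 := funext hσ₂
  refine ⟨fun w hw => ?_, fun z hz => ?_, fun z => ?_, ?_, ?_, ?_⟩
  · simp only [map_div₀, map_sub, map_pow, map_inv₀, conj_conj, map_ofNat, inv_div]
    field_simp
  · have h := thirteen_add_twelve_mul_mem_slitPlane hz
    exact ⟨(hasDerivAt_one_add_sqrtDisc_div_six h).differentiableAt,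
      (hasDerivAt_one_sub_sqrtDisc_div_six h).differentiableAt⟩
  · exact ⟨by linear_combination sqrtDisc_sq z / 12, by linear_combination sqrtDisc_sq z / 12⟩
  · obtain ⟨M, hM⟩ := exists_bound_mul_logDeriv_one_add_sqrtDisc
    refine ⟨M, fun z hz => ?_⟩
    rw [hg₁, mul_div_assoc, ← logDeriv_apply]
    exact hM z (ball_subset_closedBall hz)
  · simp [sqrtDisc_neg_one]
  · refine ⟨-1, by norm_num, tendsto_add_one_mul_mul_logDeriv_one_sub_sqrtDisc.congr fun z => ?_⟩
    rw [hg₂, mul_div_assoc, logDeriv_apply]
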